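/- arXiv:2005.10812 — 2 statements merged into one kernel-verified Lean document; each statement's English description precedes it below -/
import Mathlib

section
/- Fix a coloring c : [ν]² → λ and a color i < λ. Define α <ᵢ β (for ordinals α < β < ν) to mean that {α, β} is well-connected in color i. Then ≤ᵢ is a partial order on ν and moreover a tree order: for every β < ν, the set of <ᵢ-predecessors of β is well-ordered by <ᵢ. -/
open Cardinal Set

noncomputable section

/-- The color of the unordered pair `{a,b}` under `c`. -/
def pairColor (c : Ordinal → Ordinal → Ordinal) (a b : Ordinal) : Ordinal :=
  c (min a b) (max a b)

/-- `X` is well-connected in the set of colors `Λ` with respect to `c`, with the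
connecting paths allowed to use any vertices from `Dom`. -/
def WellConnectedIn (Dom : Set Ordinal) (c : Ordinal → Ordinal → Ordinal)
    (Λ : Set Ordinal) (X : Set Ordinal) : Prop :=
  ∀ α ∈ X, ∀ β ∈ X, α < β →
    ∃ (n : ℕ) (f : ℕ → Ordinal), f 0 = α ∧ f n = β ∧
      (∀ k ≤ n, α ≤ f k ∧ f k ∈ Dom) ∧
      (∀ k < n, f k ≠ f (k + 1) ∧ pairColor c (f k) (f (k + 1)) ∈ Λ)

/-- `α <ᵢ β`: `α < β < ν` and the pair `{α, β}` is well-connected in color `i`. -/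
def ltColor (ν : Ordinal) (c : Ordinal → Ordinal → Ordinal) (i : Ordinal)
    (α β : Ordinal) : Prop :=
  α < β ∧ β < ν ∧ WellConnectedIn (Set.Iio ν) c {i} {α, β}

lemma pairColor_comm (c : Ordinal → Ordinal → Ordinal) (a b : Ordinal) :
    pairColor c a b = pairColor c b a := by
  unfold pairColor; rw [min_comm, max_comm]

/-- Extract a path from `ltColor`. -/
lemma ltColor_path {ν : Ordinal} {c : Ordinal → Ordinal → Ordinal} {i α β : Ordinal}
    (h : ltColor ν c i α β) :
    ∃ (n : ℕ) (f : ℕ → Ordinal), f 0 = α ∧ f n = β ∧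
      (∀ k ≤ n, α ≤ f k ∧ f k < ν) ∧
      (∀ k < n, f k ≠ f (k + 1) ∧ pairColor c (f k) (f (k + 1)) = i) := by
  obtain ⟨hlt, hν, hwc⟩ := h
  obtain ⟨n, f, h0, hn, hb, he⟩ := hwc α (by simp) β (by simp) hlt
  exact ⟨n, f, h0, hn, fun k hk => ⟨(hb k hk).1, (hb k hk).2⟩,
    fun k hk => ⟨(he k hk).1, by simpa using (he k hk).2⟩⟩

/-- Build `ltColor` from a path. -/
lemma ltColor_of_path {ν : Ordinal} {c : Ordinal → Ordinal → Ordinal} {i α β : Ordinal}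
    (hαβ : α < β) (hβ : β < ν)
    (n : ℕ) (f : ℕ → Ordinal) (h0 : f 0 = α) (hn : f n = β)
    (hb : ∀ k ≤ n, α ≤ f k ∧ f k < ν)
    (he : ∀ k < n, f k ≠ f (k + 1) ∧ pairColor c (f k) (f (k + 1)) = i) :
    ltColor ν c i α β := by
  refine ⟨hαβ, hβ, fun x hx y hy hxy => ?_⟩
  rcases hx with hx | hx <;> rcases hy with hy | hy <;> subst hx <;> subst hy
  · exact absurd hxy (lt_irrefl _)
  · exact ⟨n, f, h0, hn, fun k hk => ⟨(hb k hk).1, (hb k hk).2⟩,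
      fun k hk => ⟨(he k hk).1, by simp [(he k hk).2]⟩⟩
  · exact absurd (hxy.trans hαβ) (lt_irrefl _)
  · exact absurd hxy (lt_irrefl _)

/-- Glue two paths. -/
lemma path_glue {ν : Ordinal} {c : Ordinal → Ordinal → Ordinal} {i α β γ : Ordinal}
    (n m : ℕ) (f g : ℕ → Ordinal)
    (hf0 : f 0 = α) (hfn : f n = β) (hg0 : g 0 = β) (hgm : g m = γ)
    (hfb : ∀ k ≤ n, α ≤ f k ∧ f k < ν) (hgb : ∀ k ≤ m, α ≤ g k ∧ g k < ν)
    (hfe : ∀ k < n, f k ≠ f (k + 1) ∧ pairColor c (f k) (f (k + 1)) = i)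
    (hge : ∀ k < m, g k ≠ g (k + 1) ∧ pairColor c (g k) (g (k + 1)) = i) :
    ∃ (N : ℕ) (F : ℕ → Ordinal), F 0 = α ∧ F N = γ ∧
      (∀ k ≤ N, α ≤ F k ∧ F k < ν) ∧
      (∀ k < N, F k ≠ F (k + 1) ∧ pairColor c (F k) (F (k + 1)) = i) := by
  refine ⟨n + m, fun k => if k < n then f k else g (k - n), ?_, ?_, ?_, ?_⟩
  · by_cases h : 0 < n
    · simp [h, hf0]
    · have hn0 : n = 0 := by omega
      subst hn0
      simp only [lt_irrefl, if_neg (lt_irrefl 0)]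
      rw [hg0, ← hfn, hf0]
      simp
  · have h : ¬ (n + m < n) := by omega
    simp [h, hgm]
  · intro k hk
    by_cases h : k < n
    · simp only [if_pos h]; exact hfb k h.le
    · simp only [if_neg h]; exact hgb (k - n) (by omega)
  · intro k hk
    by_cases h1 : k + 1 < n
    · have h : k < n := by omega
      simp only [if_pos h, if_pos h1]
      exact hfe k h
    · by_cases h : k < n
      · have hk1 : k + 1 = n := by omega
        simp only [if_pos h, if_neg (by omega : ¬ (k + 1 < n))]
        have : g (k + 1 - n) = f (k + 1) := by rw [hk1]; simp [hg0, ← hfn]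
        rw [this]
        exact hfe k h
      · simp only [if_neg h, if_neg h1]
        have h2 : k + 1 - n = (k - n) + 1 := by omega
        rw [h2]
        exact hge (k - n) (by omega)

/-- For a coloring `c : [ν]² → λ` and a color `i`, the relation `≤ᵢ` is a partial
order on `ν` which is moreover a tree order: the relation `<ᵢ` is transitive
(reflexivity and antisymmetry of `≤ᵢ` being automatic since `α <ᵢ β` entails
`α < β`), the set of `<ᵢ`-predecessors of any `β < ν` is linearly ordered by `<ᵢ`,
and indeed well-ordered by `<ᵢ`: every nonempty set of `<ᵢ`-predecessors of `β`
has a `<ᵢ`-least element. -/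
theorem stmt3 (ν : Ordinal) (c : Ordinal → Ordinal → Ordinal) (i : Ordinal) :
    -- transitivity
    (∀ α β γ, ltColor ν c i α β → ltColor ν c i β γ → ltColor ν c i α γ) ∧
    -- irreflexivity (so that `≤ᵢ`, the reflexive closure, is a partial order)
    (∀ α, ¬ ltColor ν c i α α) ∧
    -- predecessors of any β are linearly ordered by `<ᵢ`
    (∀ β α₁ α₂, ltColor ν c i α₁ β → ltColor ν c i α₂ β → α₁ < α₂ →
      ltColor ν c i α₁ α₂) ∧
    -- predecessors of any β are well-ordered by `<ᵢ`
    (∀ β, ∀ S ⊆ {α | ltColor ν c i α β}, S.Nonempty →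
      ∃ m ∈ S, ∀ a ∈ S, a ≠ m → ltColor ν c i m a) := by
  -- main proofs
  have trans : ∀ α β γ, ltColor ν c i α β → ltColor ν c i β γ → ltColor ν c i α γ := by
    intro α β γ hab hbc
    obtain ⟨n, f, hf0, hfn, hfb, hfe⟩ := ltColor_path hab
    obtain ⟨m, g, hg0, hgm, hgb, hge⟩ := ltColor_path hbc
    have hαβ : α < β := hab.1
    obtain ⟨N, F, h0, hN, hb, he⟩ := path_glue n m f g hf0 hfn hg0 hgm hfb
      (fun k hk => ⟨hαβ.le.trans (hgb k hk).1, (hgb k hk).2⟩) hfe hge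
    exact ltColor_of_path (hαβ.trans hbc.1) hbc.2.1 N F h0 hN hb he
  have linear : ∀ β α₁ α₂, ltColor ν c i α₁ β → ltColor ν c i α₂ β → α₁ < α₂ →
      ltColor ν c i α₁ α₂ := by
    intro β α₁ α₂ h1 h2 h12
    obtain ⟨n, f, hf0, hfn, hfb, hfe⟩ := ltColor_path h1
    obtain ⟨m, g, hg0, hgm, hgb, hge⟩ := ltColor_path h2
    -- reverse g : a path from β to α₂
    set g' : ℕ → Ordinal := fun k => g (m - k) with hg'
    have hg'0 : g' 0 = β := by simp [hg', hgm]
    have hg'm : g' m = α₂ := by simp [hg', hg0]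
    have hg'b : ∀ k ≤ m, α₁ ≤ g' k ∧ g' k < ν := by
      intro k hk
      exact ⟨h12.le.trans (hgb (m - k) (by omega)).1, (hgb (m - k) (by omega)).2⟩
    have hg'e : ∀ k < m, g' k ≠ g' (k + 1) ∧ pairColor c (g' k) (g' (k + 1)) = i := by
      intro k hk
      have h1' : m - k = (m - (k + 1)) + 1 := by omega
      simp only [hg']
      rw [h1']
      exact ⟨(hge (m - (k + 1)) (by omega)).1.symm,
        (pairColor_comm c _ _).trans (hge (m - (k + 1)) (by omega)).2⟩
    obtain ⟨N, F, h0, hN, hb, he⟩ := path_glue n m f g' hf0 hfn hg'0 hg'm hfb hg'b hfe hg'e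
    exact ltColor_of_path h12 (h2.1.trans h2.2.1) N F h0 hN hb he
  refine ⟨trans, fun α h => absurd h.1 (lt_irrefl α), linear, ?_⟩
  intro β S hS hne
  obtain ⟨m, hmS, hmin⟩ := Ordinal.wellFoundedLT.wf.has_min S hne
  refine ⟨m, hmS, fun a ha hne' => ?_⟩
  have hma : m < a := by
    rcases lt_trichotomy a m with h | h | h
    · exact absurd h (hmin a ha)
    · exact absurd h hne'
    · exact h
  exact linear β m a (hS hmS) (hS ha) hma


end
end

section
/- Suppose U is an ultrafilter on a cardinal ν such that every member of U has cardinality ν, and c : [ν]² → λ is a coloring such that for some fixed color i and some X ∈ U, for every α ∈ X the set X_α = {β > α : c(α, β) = i} belongs to U. Then the graph G = (X, c⁻¹(i) ∩ [X]²) is highly connected: for every Y ⊆ X with |Y| < ν, any two vertices of X \ Y are joined by a path of length 2 in G \ Y. -/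
open Cardinal Set

noncomputable section

/-- Suppose `U` is an ultrafilter on the cardinal `ν` all of whose members have
cardinality `ν`, `c` is a coloring, `i` a color, and `X ∈ U` is such that for every
`α ∈ X` the set `X_α = {β > α : c(α,β) = i}` is in `U`.  Then the graph
`(X, c⁻¹(i) ∩ [X]²)` is highly connected: for every `Y ⊆ X` with `|Y| < ν`, any two
vertices `α < β` of `X \ Y` are joined by a path `⟨α, γ, β⟩` of length 2 in `G \ Y`,
where `γ ∈ (X ∩ X_α ∩ X_β) \ Y`. -/
theorem stmt6 (ν : Cardinal.{0}) (lam : Cardinal.{0}) (i : Ordinal)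
    (c : Ordinal → Ordinal → Ordinal) (hc : ∀ a b, pairColor c a b < lam.ord)
    (U : Ultrafilter ↥(Set.Iio ν.ord))
    (hU : ∀ A : Set ↥(Set.Iio ν.ord), A ∈ U → #A = Cardinal.lift.{1} ν)
    (X : Set ↥(Set.Iio ν.ord)) (hX : X ∈ U)
    (hXα : ∀ α ∈ X,
      {β : ↥(Set.Iio ν.ord) | (α : Ordinal) < (β : Ordinal) ∧
        pairColor c (α : Ordinal) (β : Ordinal) = i} ∈ U) :
    ∀ Y ⊆ X, #Y < Cardinal.lift.{1} ν →
      ∀ α ∈ X \ Y, ∀ β ∈ X \ Y, (α : Ordinal) < (β : Ordinal) →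
        ∃ γ ∈ (X \ Y), (α : Ordinal) < (γ : Ordinal) ∧ (β : Ordinal) < (γ : Ordinal) ∧
          pairColor c (α : Ordinal) (γ : Ordinal) = i ∧
          pairColor c (β : Ordinal) (γ : Ordinal) = i := by
  intro Y hY hYcard α hα β hβ hαβ
  set Xa := {β' : ↥(Set.Iio ν.ord) | (α : Ordinal) < (β' : Ordinal) ∧
      pairColor c (α : Ordinal) (β' : Ordinal) = i}
  set Xb := {γ : ↥(Set.Iio ν.ord) | (β : Ordinal) < (γ : Ordinal) ∧
      pairColor c (β : Ordinal) (γ : Ordinal) = i}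
  have hA : X ∩ Xa ∩ Xb ∈ U :=
    Filter.inter_mem (Filter.inter_mem hX (hXα α hα.1)) (hXα β hβ.1)
  have hcard : #(X ∩ Xa ∩ Xb : Set _) = Cardinal.lift.{1} ν := hU _ hA
  have hne : ((X ∩ Xa ∩ Xb) \ Y).Nonempty := by
    rw [Set.nonempty_iff_ne_empty]
    intro h
    have hsub : (X ∩ Xa ∩ Xb : Set _) ⊆ Y := by
      intro x hx
      by_contra hxY
      exact (Set.eq_empty_iff_forall_notMem.mp h) x ⟨hx, hxY⟩
    have := Cardinal.mk_le_mk_of_subset hsub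
    rw [hcard] at this
    exact absurd (this.trans_lt hYcard) (lt_irrefl _)
  obtain ⟨γ, ⟨⟨hγX, hγa⟩, hγb⟩, hγY⟩ := hne
  exact ⟨γ, ⟨hγX, hγY⟩, hγa.1, hγb.1, hγa.2, hγb.2⟩

end
end
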